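/- If φ : [0,∞) → (0,∞) is self-neglecting and ψ(x)/φ(x) → 1 as x → ∞ with ψ positive, then ψ is Beurling slowly varying: ψ(x)/x → 0 and for each t, ψ(x + tψ(x))/ψ(x) → 1 as x → ∞. -/
import Mathlib


open Filter Topology

/-- If `φ` is self-neglecting and `ψ/φ → 1` with `ψ` positive, then `ψ` is
Beurling slowly varying. -/
theorem beurling_slowly_varying_of_asymp_selfNeglecting (φ ψ : ℝ → ℝ)
    (hφpos : ∀ x : ℝ, 0 ≤ x → 0 < φ x)
    (hψpos : ∀ x : ℝ, 0 ≤ x → 0 < ψ x)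
    (ho : Tendsto (fun x => φ x / x) atTop (𝓝 0))
    (hsn : ∀ K : Set ℝ, IsCompact K →
      TendstoUniformlyOn (fun x t => φ (x + t * φ x) / φ x) (fun _ => 1) atTop K)
    (hψφ : Tendsto (fun x => ψ x / φ x) atTop (𝓝 1)) :
    Tendsto (fun x => ψ x / x) atTop (𝓝 0) ∧
    ∀ t : ℝ, Tendsto (fun x => ψ (x + t * ψ x) / ψ x) atTop (𝓝 1) := by
  have h1 : Tendsto (fun x => ψ x / x) atTop (𝓝 0) := by
    have h := hψφ.mul ho
    rw [one_mul] at h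
    refine h.congr' ?_
    filter_upwards [eventually_gt_atTop 0] with x hx
    have hφ := (hφpos x hx.le).ne'
    field_simp
  refine ⟨h1, fun t => ?_⟩
  -- φ x / ψ x → 1
  have hφψ : Tendsto (fun x => φ x / ψ x) atTop (𝓝 1) := by
    have := hψφ.inv₀ one_ne_zero
    simpa [inv_div] using this
  -- the rescaled shift tends to t
  have hratio : Tendsto (fun x => t * (ψ x / φ x)) atTop (𝓝 t) := by
    simpa using hψφ.const_mul t
  -- uniform convergence on [t-1, t+1]
  have hK := hsn (Set.Icc (t - 1) (t + 1)) isCompact_Icc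
  have hmem : ∀ᶠ x in atTop, t * (ψ x / φ x) ∈ Set.Icc (t - 1) (t + 1) := by
    have := hratio (Icc_mem_nhds (by linarith : t - 1 < t) (by linarith : t < t + 1))
    simpa using this
  have hφy : Tendsto (fun x => φ (x + (t * (ψ x / φ x)) * φ x) / φ x) atTop (𝓝 1) := by
    rw [Metric.tendsto_nhds]
    intro ε hε
    have hU := (Metric.tendstoUniformlyOn_iff.mp hK) ε hε
    filter_upwards [hU, hmem] with x hx hmemx
    have := hx _ hmemx
    rwa [dist_comm] at this
  have hφy' : Tendsto (fun x => φ (x + t * ψ x) / φ x) atTop (𝓝 1) := by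
    refine hφy.congr' ?_
    filter_upwards [eventually_ge_atTop 0] with x hx
    have hφ := (hφpos x hx).ne'
    rw [mul_assoc, div_mul_cancel₀ _ hφ]
  -- x + t * ψ x → ∞
  have hy_top : Tendsto (fun x => x + t * ψ x) atTop atTop := by
    have hsmall : ∀ᶠ x in atTop, |t * (ψ x / x)| < 1 / 2 := by
      have habs : Tendsto (fun x => |t * (ψ x / x)|) atTop (𝓝 0) := by
        simpa using (h1.const_mul t).abs
      exact habs.eventually_lt_const (by norm_num)
    have hmono : ∀ᶠ x in atTop, x / 2 ≤ x + t * ψ x := by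
      filter_upwards [hsmall, eventually_gt_atTop 0] with x hx hx0
      have habs : |t * ψ x| ≤ x / 2 := by
        have heq : |t * ψ x| = |t * (ψ x / x)| * x := by
          rw [abs_mul, abs_mul, abs_div, abs_of_pos hx0, mul_assoc,
            div_mul_cancel₀ _ hx0.ne']
        have hle : |t * (ψ x / x)| * x ≤ (1 / 2) * x :=
          mul_le_mul_of_nonneg_right hx.le hx0.le
        rw [heq]; linarith
      have := neg_abs_le (t * ψ x)
      linarith
    exact tendsto_atTop_mono' atTop hmono (tendsto_id.atTop_div_const two_pos)
  have hψy : Tendsto (fun x => ψ (x + t * ψ x) / φ (x + t * ψ x)) atTop (𝓝 1) :=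
    hψφ.comp hy_top
  have hfinal := (hψy.mul hφy').mul hφψ
  rw [show (1:ℝ) * 1 * 1 = 1 by ring] at hfinal
  refine hfinal.congr' ?_
  filter_upwards [eventually_ge_atTop 0, hy_top.eventually_ge_atTop 0] with x hx hy
  have hφx := (hφpos x hx).ne'
  have hψx := (hψpos x hx).ne'
  have hφyne := (hφpos _ hy).ne'
  field_simp
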